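/- (Any equivariant homotopy momentum section induces a weak homotopy momentum section, degree-k component.) Let (A, L, ρ) be a Lie–Rinehart algebra over ℝ with a connection ∇, fix n ≥ 1 and 0 ≤ k ≤ n−1, let ω be an alternating A-multilinear (n+1)-form on Der_ℝ(A), and let Ω^k be the A-module of alternating A-multilinear maps Der_ℝ(A)^k → A with the Lie derivative action L_X. Let μ_k : L^{n−k} → Ω^k be alternating A-multilinear and equivariant, and let ν : L^{n−k+1} → Ω^k be any alternating A-multilinear map (representing ∇μ_{k−1}) such that the homotopy momentum section equation ν(e₁,…,e_{n+1−k}) + (ᴱdμ_k)(e₁,…,e_{n+1−k}) = −(ι_ρ^{n+1−k}ω)(e₁,…,e_{n+1−k}) holds for all e₁,…,e_{n+1−k} ∈ L. Then for all e₁,…,e_{n+1−k} ∈ L with Σ_{i<j} (−1)^{i+j} [e_i,e_j]^∇ ∧ e₁ ∧ … ∧ ê_i ∧ … ∧ ê_j ∧ … ∧ e_{n+1−k} = 0 in the (n−k)-th exterior power of the A-module L (Lie kernel elements), the weak homotopy momentum section equation holds: ν(e₁,…,e_{n+1−k}) = −(ι_ρ^{n+1−k}ω)(e₁,…,e_{n+1−k}).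 -/

import Mathlib

/-!
Equivariance writes `L_{ρ(eᵢ)}(μ_k(e₁,…,êᵢ,…))` as a sum over the remaining slots `j`, with
`μ_k` evaluated at `⁅eᵢ,eⱼ⁆ + ∇_{ρ(eⱼ)}eᵢ` in place of `eⱼ`. In the alternating sum over `i`
the slots `(i, j)` and `(j, i)` pair up to `−(−1)^{i+j} μ_k(⁅eᵢ,eⱼ⁆ + [eᵢ,eⱼ]^∇, …)`, whose
Lie-bracket part cancels the bracket term of `ᴱdμ_k`. Hence
`ᴱdμ_k(e) = −Σ_{i<j} (−1)^{i+j} μ_k([eᵢ,eⱼ]^∇, …)`, the image of the Lie-kernel element under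
the linear map on the exterior algebra induced by `μ_k`; it vanishes, and the homotopy momentum
equation becomes the weak one. Degrees are encoded as `p = n − k`.
-/

open scoped BigOperators

/-- The tuple obtained from `e : Fin (m+1) → L` by inserting `b` in front and
omitting the entries at positions `i` and `j` (intended for `i < j`). -/
def omit2cons {L : Type*} {m : ℕ} (b : L) (e : Fin (m + 1) → L) (i j : Fin (m + 1)) :
    Fin m → L := fun k =>
  if (k : ℕ) = 0 then b
  else e ⟨if (k : ℕ) - 1 < (i : ℕ) then (k : ℕ) - 1
          else if (k : ℕ) < (j : ℕ) then (k : ℕ) else (k : ℕ) + 1,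
        by have := k.isLt; split_ifs <;> omega⟩

/-- The tuple obtained from `f : Fin m → L` by inserting `b` in front and omitting
the entry at position `i`. -/
def consOmit1 {L : Type*} {m : ℕ} (b : L) (f : Fin m → L) (i : Fin m) : Fin m → L := fun k =>
  if (k : ℕ) = 0 then b
  else f ⟨if (k : ℕ) - 1 < (i : ℕ) then (k : ℕ) - 1 else (k : ℕ),
        by have := k.isLt; split_ifs <;> omega⟩

/-- The induced connection on `A`-valued `m`-forms on `L`:
`(∇_X α)(e₁,…,e_m) = X(α(e₁,…,e_m)) − Σᵢ α(e₁,…,∇_X eᵢ,…,e_m)`. -/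
def connForm {A : Type*} [CommRing A] [Algebra ℝ A]
    {L : Type*} [LieRing L] [LieAlgebra ℝ L] [Module A L]
    (D : Derivation ℝ A A → L → L) {m : ℕ}
    (X : Derivation ℝ A A) (α : (Fin m → L) → A) (f : Fin m → L) : A :=
  X (α f) - ∑ i : Fin m, α (Function.update f i (D X (f i)))

/-- The covariantized bracket `[e₁,e₂]^∇ = ⁅e₁,e₂⁆ − ∇_{ρ(e₁)}e₂ + ∇_{ρ(e₂)}e₁`. -/
def covBracket {A : Type*} [CommRing A] [Algebra ℝ A]
    {L : Type*} [LieRing L] [LieAlgebra ℝ L] [Module A L]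
    (ρ : L →ₗ[A] Derivation ℝ A A) (D : Derivation ℝ A A → L → L) (e₁ e₂ : L) : L :=
  ⁅e₁, e₂⁆ - D (ρ e₁) e₂ + D (ρ e₂) e₁

/-- The Lie derivative of a raw `k`-form on the derivations of `A` along a derivation `X`:
`(L_X β)(X₁,…,X_k) = X(β(X₁,…,X_k)) − Σᵢ β(X₁,…,⁅X,Xᵢ⁆,…,X_k)`. -/
def lieDer {A : Type*} [CommRing A] [Algebra ℝ A] {k : ℕ} (X : Derivation ℝ A A)
    (β : (Fin k → Derivation ℝ A A) → A) (Y : Fin k → Derivation ℝ A A) : A :=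
  X (β Y) - ∑ i : Fin k, β (Function.update Y i ⁅X, Y i⁆)


open Function

section Tuples

variable {L : Type*}

theorem consOmit1_comp_cycleRange {m : ℕ} (b : L) (f : Fin m → L) (l : Fin m) :
    consOmit1 b f l ∘ l.cycleRange = update f l b := by
  funext k
  rcases lt_or_ge l k with h | h
  · rw [comp_apply, Fin.cycleRange_of_gt h, update_of_ne h.ne']
    simp only [consOmit1]
    grind
  · have hv := Fin.coe_cycleRange_of_le h
    simp only [comp_apply, consOmit1, hv, update_apply]
    grind

theorem consOmit1_comp_succAbove_of_lt {p : ℕ} (b : L) (e : Fin (p + 1) → L) {i : Fin (p + 1)}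
    {l : Fin p} (h : l.castSucc < i) :
    consOmit1 b (e ∘ i.succAbove) l = omit2cons b e l.castSucc i := by
  funext x
  simp only [consOmit1, omit2cons, comp_apply, Fin.succAbove]
  grind

theorem consOmit1_comp_succAbove_of_le {p : ℕ} (b : L) (e : Fin (p + 1) → L) {i : Fin (p + 1)}
    {l : Fin p} (h : i ≤ l.castSucc) :
    consOmit1 b (e ∘ i.succAbove) l = omit2cons b e i l.succ := by
  funext x
  simp only [consOmit1, omit2cons, comp_apply, Fin.succAbove]
  grind

theorem omit2cons_eq_update_zero {m : ℕ} [NeZero m] (b c : L) (e : Fin (m + 1) → L)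
    (i j : Fin (m + 1)) : omit2cons b e i j = update (omit2cons c e i j) 0 b := by
  funext x
  simp only [omit2cons, update_apply, Fin.ext_iff, Fin.val_zero]
  grind

end Tuples

section AlternatingMap

variable {R M N : Type*} [CommRing R] [AddCommGroup M] [Module R M] [AddCommGroup N] [Module R N]

theorem AlternatingMap.map_update_eq_neg_one_pow_smul_map_consOmit1 {m : ℕ}
    (μ : AlternatingMap R M N (Fin m)) (b : M) (f : Fin m → M) (l : Fin m) :
    μ (update f l b) = (-1 : ℤ) ^ (l : ℕ) • μ (consOmit1 b f l) := by
  rw [← consOmit1_comp_cycleRange, μ.map_perm, Fin.sign_cycleRange, Units.smul_def]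
  norm_num

theorem AlternatingMap.map_omit2cons_add {m : ℕ} [NeZero m] (μ : AlternatingMap R M N (Fin m))
    (b c : M) (e : Fin (m + 1) → M) (i j : Fin (m + 1)) :
    μ (omit2cons (b + c) e i j) = μ (omit2cons b e i j) + μ (omit2cons c e i j) := by
  rw [omit2cons_eq_update_zero (b + c) 0, omit2cons_eq_update_zero b 0,
    omit2cons_eq_update_zero c 0, μ.map_update_add]

theorem AlternatingMap.map_omit2cons_sub {m : ℕ} [NeZero m] (μ : AlternatingMap R M N (Fin m))
    (b c : M) (e : Fin (m + 1) → M) (i j : Fin (m + 1)) :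
    μ (omit2cons (b - c) e i j) = μ (omit2cons b e i j) - μ (omit2cons c e i j) := by
  rw [omit2cons_eq_update_zero (b - c) 0, omit2cons_eq_update_zero b 0,
    omit2cons_eq_update_zero c 0, μ.map_update_sub]

end AlternatingMap

theorem Fin.sum_sum_succAbove_eq_sum_sum_lt {M : Type*} [AddCommMonoid M] {n : ℕ}
    (g : Fin (n + 1) → Fin (n + 1) → M) :
    ∑ i, ∑ l : Fin n, g i (i.succAbove l) = ∑ i, ∑ j, if i < j then g i j + g j i else 0 := by
  have hoff : ∀ i, ∑ l : Fin n, g i (i.succAbove l) = ∑ j, if i ≠ j then g i j else 0 := by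
    intro i
    rw [Fin.sum_univ_succAbove _ i, if_neg (not_not.mpr rfl), zero_add]
    exact Finset.sum_congr rfl fun l _ => (if_pos (Fin.succAbove_ne i l).symm).symm
  calc ∑ i, ∑ l : Fin n, g i (i.succAbove l)
      = ∑ i, ∑ j, ((if i < j then g i j else 0) + if j < i then g i j else 0) := by
        refine Finset.sum_congr rfl fun i _ => (hoff i).trans (Finset.sum_congr rfl fun j _ => ?_)
        rcases lt_trichotomy i j with h | rfl | h
        · simp [h, h.ne, h.asymm]
        · simp
        · simp [h, h.ne', h.asymm]
    _ = (∑ i, ∑ j, if i < j then g i j else 0) + ∑ i, ∑ j, if j < i then g i j else 0 := by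
        simp only [Finset.sum_add_distrib]
    _ = (∑ i, ∑ j, if i < j then g i j else 0) + ∑ i, ∑ j, if i < j then g j i else 0 := by
        rw [Finset.sum_comm (f := fun i j => if j < i then g i j else 0)]
    _ = ∑ i, ∑ j, if i < j then g i j + g j i else 0 := by
        simp only [ite_add_zero, Finset.sum_add_distrib]

def bracketSum {L N : Type*} [AddCommGroup N] {m : ℕ} (β : L → L → L) (g : (Fin m → L) → N)
    (e : Fin (m + 1) → L) : N :=
  ∑ i : Fin (m + 1), ∑ j : Fin (m + 1), if i < j then
    (-1 : ℤ) ^ ((i : ℕ) + (j : ℕ)) • g (omit2cons (β (e i) (e j)) e i j) else 0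

theorem map_bracketSum {L N N' F : Type*} [AddCommGroup N] [AddCommGroup N'] [FunLike F N N']
    [AddMonoidHomClass F N N'] {m : ℕ} (φ : F) (β : L → L → L) (g : (Fin m → L) → N)
    (e : Fin (m + 1) → L) : φ (bracketSum β g e) = bracketSum β (φ ∘ g) e := by
  simp only [bracketSum, map_sum, apply_ite φ, map_zsmul, map_zero, comp_apply]

theorem bracketSum_eq_zero_of_bracketSum_ιMulti_eq_zero {R L N : Type*} [CommRing R]
    [AddCommGroup L] [Module R L] [AddCommGroup N] [Module R N] {m : ℕ} (β : L → L → L)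
    (μ : AlternatingMap R L N (Fin m)) {e : Fin (m + 1) → L}
    (h : bracketSum β (ExteriorAlgebra.ιMulti R m) e = 0) : bracketSum β μ e = 0 := by
  classical
  have hlift := congrArg (ExteriorAlgebra.liftAlternating (Pi.single m μ)) h
  rw [map_bracketSum, map_zero] at hlift
  simpa [comp_def] using hlift

/-- The differential `ᴱd`, where `Λ e f` plays the role of `L_{ρ(e)}(μ f)`. -/
def extDiff {L N : Type*} [LieRing L] [AddCommGroup N] {p : ℕ} (μ : (Fin p → L) → N)
    (Λ : L → (Fin p → L) → N) (e : Fin (p + 1) → L) : N :=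
  ∑ i : Fin (p + 1), (-1 : ℤ) ^ (i : ℕ) • Λ (e i) (e ∘ i.succAbove)
    + bracketSum (fun a b => ⁅a, b⁆) μ e

section LieRinehart

variable {A : Type*} [CommRing A] [Algebra ℝ A] {L : Type*} [LieRing L] [LieAlgebra ℝ L]
  [Module A L] {N : Type*} [AddCommGroup N] [Module A N]
  (ρ : L →ₗ[A] Derivation ℝ A A) (D : Derivation ℝ A A → L → L) {p : ℕ}

/-- Equivariance of `μ`, where `Λ e f` plays the role of `L_{ρ(e)}(μ f)`. -/
def IsEquivariant (μ : AlternatingMap A L N (Fin p)) (Λ : L → (Fin p → L) → N) : Prop :=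
  ∀ e f, Λ e f - ∑ i : Fin p, μ (update f i (D (ρ e) (f i)))
    = ∑ i : Fin p, (-1 : ℤ) ^ (i : ℕ) • μ (consOmit1 (covBracket ρ D e (f i)) f i)

variable {ρ D}

theorem IsEquivariant.eq_sum_map_update {μ : AlternatingMap A L N (Fin p)}
    {Λ : L → (Fin p → L) → N} (h : IsEquivariant ρ D μ Λ) (e : L) (f : Fin p → L) :
    Λ e f = ∑ l, μ (update f l (⁅e, f l⁆ + D (ρ (f l)) e)) := by
  rw [sub_eq_iff_eq_add'.mp (h e f), ← Finset.sum_add_distrib]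
  refine Finset.sum_congr rfl fun l _ => ?_
  rw [← μ.map_update_eq_neg_one_pow_smul_map_consOmit1, ← μ.map_update_add, covBracket]
  congr 2
  abel

theorem IsEquivariant.extDiff_eq_neg_bracketSum_covBracket {μ : AlternatingMap A L N (Fin p)}
    {Λ : L → (Fin p → L) → N} (h : IsEquivariant ρ D μ Λ) (e : Fin (p + 1) → L) :
    extDiff μ Λ e = -bracketSum (covBracket ρ D) μ e := by
  set c : Fin (p + 1) → Fin (p + 1) → L := fun i j => ⁅e i, e j⁆ + D (ρ (e j)) (e i)
  -- `g i j` is the signed term of `L_{ρ(eᵢ)}(μ …)` in which `c i j` takes the place of `eⱼ`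
  set g : Fin (p + 1) → Fin (p + 1) → N := fun i j =>
    if j < i then (-1 : ℤ) ^ ((i : ℕ) + (j : ℕ)) • μ (omit2cons (c i j) e j i)
    else -((-1 : ℤ) ^ ((i : ℕ) + (j : ℕ)) • μ (omit2cons (c i j) e i j))
  have hΛ : ∀ i : Fin (p + 1),
      (-1 : ℤ) ^ (i : ℕ) • Λ (e i) (e ∘ i.succAbove) = ∑ l, g i (i.succAbove l) := by
    intro i
    rw [h.eq_sum_map_update, Finset.smul_sum]
    refine Finset.sum_congr rfl fun l _ => ?_
    rw [μ.map_update_eq_neg_one_pow_smul_map_consOmit1, smul_smul, ← pow_add]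
    rcases lt_or_ge l.castSucc i with hl | hl
    · rw [consOmit1_comp_succAbove_of_lt _ _ hl]
      simp [g, c, Fin.succAbove_of_castSucc_lt _ _ hl, hl]
    · have hnlt : ¬ l.succ < i := not_lt.mpr (hl.trans Fin.castSucc_lt_succ.le)
      rw [consOmit1_comp_succAbove_of_le _ _ hl]
      simp [g, c, Fin.succAbove_of_le_castSucc _ _ hl, hnlt, ← add_assoc, pow_succ]
  have hpair : ∀ i j : Fin (p + 1), i < j →
      g i j + g j i + (-1 : ℤ) ^ ((i : ℕ) + (j : ℕ)) • μ (omit2cons ⁅e i, e j⁆ e i j)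
        = -((-1 : ℤ) ^ ((i : ℕ) + (j : ℕ)) • μ (omit2cons (covBracket ρ D (e i) (e j)) e i j)) := by
    intro i j hij
    have : NeZero p := ⟨by have := Fin.lt_def.mp hij; omega⟩
    have hc : c i j - c j i = ⁅e i, e j⁆ + covBracket ρ D (e i) (e j) := by
      simp only [c, covBracket, ← lie_skew (e i) (e j)]
      abel
    have hsplit := congrArg (fun b => μ (omit2cons b e i j)) hc
    simp only [μ.map_omit2cons_sub, μ.map_omit2cons_add] at hsplit
    simp only [g, hij, not_lt.mpr hij.le, if_true, if_false, add_comm (j : ℕ),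
      sub_eq_iff_eq_add'.mp hsplit, smul_add]
    abel
  rw [extDiff, Finset.sum_congr rfl fun i _ => hΛ i, Fin.sum_sum_succAbove_eq_sum_sum_lt,
    bracketSum, bracketSum, ← Finset.sum_add_distrib, ← Finset.sum_neg_distrib]
  refine Finset.sum_congr rfl fun i _ => ?_
  rw [← Finset.sum_add_distrib, ← Finset.sum_neg_distrib]
  refine Finset.sum_congr rfl fun j _ => ?_
  split_ifs with hij
  · exact hpair i j hij
  · simp

end LieRinehart

theorem weak_homotopy_momentum_section_of_equivariant_general
    {A : Type*} [CommRing A] [Algebra ℝ A]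
    {L : Type*} [LieRing L] [LieAlgebra ℝ L] [Module A L]
    (ρ : L →ₗ[A] Derivation ℝ A A)
    (D : Derivation ℝ A A → L → L)
    {p k : ℕ}
    (ω : AlternatingMap A (Derivation ℝ A A) A (Fin (p + 1 + k)))
    (μk : AlternatingMap A L (AlternatingMap A (Derivation ℝ A A) A (Fin k)) (Fin p))
    (ν : AlternatingMap A L (AlternatingMap A (Derivation ℝ A A) A (Fin k)) (Fin (p + 1)))
    (hequiv : ∀ (e : L) (f : Fin p → L) (Y : Fin k → Derivation ℝ A A),
      lieDer (ρ e) ⇑(μk f) Y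
          - ∑ i : Fin p, (μk (Function.update f i (D (ρ e) (f i)))) Y
        = ∑ i : Fin p,
            (-1 : ℤ) ^ (i : ℕ) • (μk (consOmit1 (covBracket ρ D e (f i)) f i)) Y)
    (hms : ∀ (e : Fin (p + 1) → L) (Y : Fin k → Derivation ℝ A A),
      (ν e) Y
          + ((∑ i : Fin (p + 1),
              (-1 : ℤ) ^ (i : ℕ) • lieDer (ρ (e i)) ⇑(μk (e ∘ i.succAbove)) Y)
            + ∑ i : Fin (p + 1), ∑ j : Fin (p + 1),
                if i < j then
                  (-1 : ℤ) ^ ((i : ℕ) + (j : ℕ)) • (μk (omit2cons ⁅e i, e j⁆ e i j)) Y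
                else 0)
        = - ω (Fin.append (fun i : Fin (p + 1) => ρ (e i.rev)) Y)) :
    ∀ e : Fin (p + 1) → L,
      (∑ i : Fin (p + 1), ∑ j : Fin (p + 1),
          if i < j then
            (-1 : ℤ) ^ ((i : ℕ) + (j : ℕ)) •
              ExteriorAlgebra.ιMulti A p (omit2cons (covBracket ρ D (e i) (e j)) e i j)
          else 0) = 0 →
      ∀ Y : Fin k → Derivation ℝ A A,
        (ν e) Y = - ω (Fin.append (fun i : Fin (p + 1) => ρ (e i.rev)) Y) := by
  intro e hker Y
  let evalY : AlternatingMap A (Derivation ℝ A A) A (Fin k) →ₗ[A] A :=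
    { toFun := fun β => β Y
      map_add' := fun _ _ => rfl
      map_smul' := fun _ _ => rfl }
  let μY := evalY.compAlternatingMap μk
  let Λ : L → (Fin p → L) → A := fun e f => lieDer (ρ e) ⇑(μk f) Y
  have hequivY : IsEquivariant ρ D μY Λ := fun e f => hequiv e f Y
  have hdiff : extDiff μY Λ e = 0 := by
    rw [hequivY.extDiff_eq_neg_bracketSum_covBracket,
      bracketSum_eq_zero_of_bracketSum_ιMulti_eq_zero _ μY hker, neg_zero]
  calc (ν e) Y = (ν e) Y + extDiff μY Λ e := by rw [hdiff, add_zero]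
    _ = _ := hms e Y

/-- (Any equivariant homotopy momentum section induces a weak homotopy
momentum section, degree-`k` component.) Here `n = p + k` with `p = n − k ≥ 1`, so
`0 ≤ k ≤ n − 1`; `μ_k : L^{n−k} → Ω^k` is alternating `A`-multilinear and equivariant,
`ν : L^{n−k+1} → Ω^k` represents `∇μ_{k−1}`, and `ω` is an `(n+1) = (p+1)+k` form on
`Der_ℝ(A)`. If the homotopy momentum section equation
`ν(e₁,…) + (ᴱdμ_k)(e₁,…) = −(ι_ρ^{n+1−k}ω)(e₁,…)` holds, then on Lie-kernel elements the
weak homotopy momentum section equation `ν(e₁,…) = −(ι_ρ^{n+1−k}ω)(e₁,…)` holds. -/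
theorem weak_homotopy_momentum_section_of_equivariant
    {A : Type*} [CommRing A] [Algebra ℝ A]
    {L : Type*} [LieRing L] [LieAlgebra ℝ L] [Module A L]
    (ρ : L →ₗ[A] Derivation ℝ A A)
    (hanchor : ∀ e₁ e₂ : L, ρ ⁅e₁, e₂⁆ = ⁅ρ e₁, ρ e₂⁆)
    (hleibniz : ∀ (a : A) (e₁ e₂ : L), ⁅e₁, a • e₂⁆ = a • ⁅e₁, e₂⁆ + ρ e₁ a • e₂)
    (D : Derivation ℝ A A → L → L)
    (hDaddX : ∀ (X Y : Derivation ℝ A A) (e : L), D (X + Y) e = D X e + D Y e)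
    (hDsmulX : ∀ (a : A) (X : Derivation ℝ A A) (e : L), D (a • X) e = a • D X e)
    (hDadd : ∀ (X : Derivation ℝ A A) (e₁ e₂ : L), D X (e₁ + e₂) = D X e₁ + D X e₂)
    (hDsmulR : ∀ (X : Derivation ℝ A A) (r : ℝ) (e : L), D X (r • e) = r • D X e)
    (hDleibniz : ∀ (X : Derivation ℝ A A) (a : A) (e : L), D X (a • e) = a • D X e + X a • e)
    {p k : ℕ} (hp : 1 ≤ p)
    (ω : AlternatingMap A (Derivation ℝ A A) A (Fin (p + 1 + k)))
    (μk : AlternatingMap A L (AlternatingMap A (Derivation ℝ A A) A (Fin k)) (Fin p))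
    (ν : AlternatingMap A L (AlternatingMap A (Derivation ℝ A A) A (Fin k)) (Fin (p + 1)))
    (hequiv : ∀ (e : L) (f : Fin p → L) (Y : Fin k → Derivation ℝ A A),
      lieDer (ρ e) ⇑(μk f) Y
          - ∑ i : Fin p, (μk (Function.update f i (D (ρ e) (f i)))) Y
        = ∑ i : Fin p,
            (-1 : ℤ) ^ (i : ℕ) • (μk (consOmit1 (covBracket ρ D e (f i)) f i)) Y)
    (hms : ∀ (e : Fin (p + 1) → L) (Y : Fin k → Derivation ℝ A A),
      (ν e) Y
          + ((∑ i : Fin (p + 1),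
              (-1 : ℤ) ^ (i : ℕ) • lieDer (ρ (e i)) ⇑(μk (e ∘ i.succAbove)) Y)
            + ∑ i : Fin (p + 1), ∑ j : Fin (p + 1),
                if i < j then
                  (-1 : ℤ) ^ ((i : ℕ) + (j : ℕ)) • (μk (omit2cons ⁅e i, e j⁆ e i j)) Y
                else 0)
        = - ω (Fin.append (fun i : Fin (p + 1) => ρ (e i.rev)) Y)) :
    ∀ e : Fin (p + 1) → L,
      (∑ i : Fin (p + 1), ∑ j : Fin (p + 1),
          if i < j then
            (-1 : ℤ) ^ ((i : ℕ) + (j : ℕ)) •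
              ExteriorAlgebra.ιMulti A p (omit2cons (covBracket ρ D (e i) (e j)) e i j)
          else 0) = 0 →
      ∀ Y : Fin k → Derivation ℝ A A,
        (ν e) Y = - ω (Fin.append (fun i : Fin (p + 1) => ρ (e i.rev)) Y) :=
  weak_homotopy_momentum_section_of_equivariant_general ρ D ω μk ν hequiv hms
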